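/- Let M be a finite MDP with alarm region and x_0 ∉ X_a an initial state. For every history-dependent policy π̂ of the binary augmented MDP M̂ with initial state (x_0,0), there exists a history-dependent policy π of M with initial state x_0 such that J_M(π) = Ĵ(π̂) and P^π(∃ t ∈ {0,…,T}: X_t ∈ X_a) = P^π̂(Y_T = 1). In particular, if π̂ satisfies P^π̂(Y_T = 1) ≤ Δ for some Δ ∈ [0,1], then π satisfies P^π(∃ t: X_t ∈ X_a) ≤ Δ and attains the same objective value. -/

import Mathlib

/- Common framework: finite MDPs with alarm region, trajectories,
   history-dependent policies, trajectory laws, objectives. -/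

attribute [local instance] Classical.propDecidable

noncomputable section

/-- A finite MDP with alarm region `Xa`, horizon `T ≥ 1`, transition pmf `P`,
running rewards `r` and terminal reward `rT`. -/
structure MDP (X A : Type) [Fintype X] [Fintype A] where
  T : ℕ
  hT : 1 ≤ T
  P : X → A → X → ℝ
  P_nonneg : ∀ x a x', 0 ≤ P x a x'
  P_sum : ∀ x a, ∑ x', P x a x' = 1
  r : Fin T → X → A → ℝ
  rT : X → ℝ
  Xa : Set X

variable {X A : Type} [Fintype X] [Fintype A]

/-- A trajectory `(x₀,…,x_T, a₀,…,a_{T-1})`. -/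
abbrev Traj (M : MDP X A) := (Fin (M.T + 1) → X) × (Fin M.T → A)

/-- A history-dependent randomized policy: at each time `t < T` it maps the
history `(x₀,…,x_t, a₀,…,a_{t-1})` to a pmf on actions. -/
structure HistPolicy (M : MDP X A) where
  π : (t : Fin M.T) → (Fin (t.val + 1) → X) → (Fin t.val → A) → A → ℝ
  nonneg : ∀ t xs as a, 0 ≤ π t xs as a
  sum_one : ∀ t xs as, ∑ a, π t xs as a = 1

/-- A policy is Markov if at each time it depends only on the current state. -/
def IsMarkov {M : MDP X A} (p : HistPolicy M) : Prop :=
  ∀ (t : Fin M.T) (xs xs' : Fin (t.val + 1) → X) (as as' : Fin t.val → A),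
    xs (Fin.last t.val) = xs' (Fin.last t.val) → p.π t xs as = p.π t xs' as'

/-- The state part of the history at time `t` determined by a trajectory. -/
def histStates {M : MDP X A} (τ : Traj M) (t : Fin M.T) : Fin (t.val + 1) → X :=
  fun i => τ.1 (Fin.castLE (by have := t.isLt; omega) i)

/-- The action part of the history at time `t` determined by a trajectory. -/
def histActs {M : MDP X A} (τ : Traj M) (t : Fin M.T) : Fin t.val → A :=
  fun i => τ.2 (Fin.castLE (by have := t.isLt; omega) i)

/-- The probability mass of a trajectory under policy `p` with initial state `x0`. -/
def trajProb (M : MDP X A) (p : HistPolicy M) (x0 : X) (τ : Traj M) : ℝ :=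
  (if τ.1 0 = x0 then (1 : ℝ) else 0) *
    ∏ t : Fin M.T,
      p.π t (histStates τ t) (histActs τ t) (τ.2 t) *
        M.P (τ.1 t.castSucc) (τ.2 t) (τ.1 t.succ)

/-- Probability of an event (a set of trajectories) under the trajectory law. -/
def probEvent (M : MDP X A) (p : HistPolicy M) (x0 : X) (E : Traj M → Prop) : ℝ :=
  ∑ τ : Traj M, if E τ then trajProb M p x0 τ else 0

/-- The objective `J_M(π) = E[Σ_t r_t(X_t,A_t) + r_T(X_T)]`. -/
def J (M : MDP X A) (p : HistPolicy M) (x0 : X) : ℝ :=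
  ∑ τ : Traj M, trajProb M p x0 τ *
    (∑ t : Fin M.T, M.r t (τ.1 t.castSucc) (τ.2 t) + M.rT (τ.1 (Fin.last M.T)))

/-- The binary augmented MDP: the extra `Bool` state records whether an alarm
has been triggered so far. -/
def binAug (M : MDP X A) : MDP (X × Bool) A where
  T := M.T
  hT := M.hT
  P := fun s a s' =>
    if s'.2 = (s.2 || decide (s'.1 ∈ M.Xa)) then M.P s.1 a s'.1 else 0
  P_nonneg := by
    intro s a s'
    try dsimp only
    split
    · exact M.P_nonneg s.1 a s'.1
    · exact le_refl 0
  P_sum := by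
    intro s a
    rw [Fintype.sum_prod_type]
    have h : ∀ x' : X,
        (∑ y : Bool, if y = (s.2 || decide (x' ∈ M.Xa)) then M.P s.1 a x' else 0)
          = M.P s.1 a x' := by
      intro x'; simp
    rw [Finset.sum_congr rfl fun x' _ => h x']
    exact M.P_sum s.1 a
  r := fun t s a => M.r t s.1 a
  rT := fun s => M.rT s.1
  Xa := {s | s.1 ∈ M.Xa}

/-!
Along a trajectory of positive probability the flag of the augmented MDP is a function of the
states visited so far: it records whether some state after the initial one lies in the alarm
region. Attaching this flag to histories is therefore a bijection between trajectories of `M` and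
the support of the augmented trajectory law, and the policy of `M` that feeds the flagged history
to `q` induces exactly the transported law. Since `x0 ∉ Xa`, the final flag of a trajectory from
`x0` is raised iff the trajectory ever enters the alarm region.
-/

section AlarmFlag

variable {α : Type*} (S : Set α) {n : ℕ}

/-- Time `0` is excluded so that the flag starts at `false` whatever the initial state. -/
def alarmFlag (xs : Fin (n + 1) → α) (i : Fin (n + 1)) : Bool :=
  decide (∃ j ≤ i, j ≠ 0 ∧ xs j ∈ S)

theorem alarmFlag_zero (xs : Fin (n + 1) → α) : alarmFlag S xs 0 = false := by
  simp [alarmFlag]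

theorem alarmFlag_succ (xs : Fin (n + 1) → α) (i : Fin n) :
    alarmFlag S xs i.succ = (alarmFlag S xs i.castSucc || decide (xs i.succ ∈ S)) := by
  have hle : ∀ j : Fin (n + 1), j ≤ i.succ ↔ j ≤ i.castSucc ∨ j = i.succ := fun j => by
    simp only [Fin.le_def, Fin.ext_iff, Fin.val_succ, Fin.val_castSucc]
    omega
  simp [alarmFlag, hle, or_and_right, exists_or, Fin.succ_ne_zero]

theorem alarmFlag_castLE {m : ℕ} (h : m + 1 ≤ n + 1) (xs : Fin (n + 1) → α) (i : Fin (m + 1)) :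
    alarmFlag S (xs ∘ Fin.castLE h) i = alarmFlag S xs (Fin.castLE h i) := by
  have hval : ∀ {k : ℕ} (j : Fin (k + 1)), j = 0 ↔ j.val = 0 := fun j => Fin.ext_iff
  simp only [alarmFlag, Function.comp_apply, decide_eq_decide, ne_eq, hval]
  constructor
  · rintro ⟨j, hji, hj0, hj⟩
    exact ⟨Fin.castLE h j, hji, hj0, hj⟩
  · rintro ⟨j, hji, hj0, hj⟩
    exact ⟨⟨j, lt_of_le_of_lt hji i.isLt⟩, hji, hj0, hj⟩

theorem alarmFlag_last_iff {xs : Fin (n + 1) → α} (h0 : xs 0 ∉ S) :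
    alarmFlag S xs (Fin.last n) = true ↔ ∃ j, xs j ∈ S := by
  simp only [alarmFlag, decide_eq_true_eq]
  refine ⟨fun ⟨j, _, _, hj⟩ => ⟨j, hj⟩, fun ⟨j, hj⟩ => ⟨j, Fin.le_last j, ?_, hj⟩⟩
  rintro rfl
  exact h0 hj

def withAlarmFlag (xs : Fin (n + 1) → α) : Fin (n + 1) → α × Bool :=
  fun i => (xs i, alarmFlag S xs i)

end AlarmFlag

section TrajProb

variable {M : MDP X A} (p : HistPolicy M) (x0 : X)

theorem trajProb_eq_zero_of_start_ne {τ : Traj M} (h : τ.1 0 ≠ x0) : trajProb M p x0 τ = 0 := by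
  rw [trajProb, if_neg h, zero_mul]

theorem trajProb_eq_zero_of_transition_eq_zero {τ : Traj M} (t : Fin M.T)
    (h : M.P (τ.1 t.castSucc) (τ.2 t) (τ.1 t.succ) = 0) : trajProb M p x0 τ = 0 :=
  mul_eq_zero_of_right _ (Finset.prod_eq_zero (Finset.mem_univ t) (mul_eq_zero_of_right _ h))

theorem probEvent_congr {E E' : Traj M → Prop} (h : ∀ τ : Traj M, τ.1 0 = x0 → (E τ ↔ E' τ)) :
    probEvent M p x0 E = probEvent M p x0 E' := by
  refine Finset.sum_congr rfl fun τ _ => ?_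
  by_cases h0 : τ.1 0 = x0
  · simp only [h τ h0]
  · simp only [trajProb_eq_zero_of_start_ne p x0 h0, ite_self]

end TrajProb

section BinAug

variable {M : MDP X A}

def HistPolicy.ofBinAug (q : HistPolicy (binAug M)) : HistPolicy M where
  π t xs := q.π t (withAlarmFlag M.Xa xs)
  nonneg t _ := q.nonneg t _
  sum_one t _ := q.sum_one t _

def liftTraj (τ : Traj M) : Traj (binAug M) :=
  (withAlarmFlag M.Xa τ.1, τ.2)

theorem liftTraj_injective : Function.Injective (liftTraj (M := M)) := by
  intro τ τ' h
  refine Prod.ext (funext fun i => ?_) (congrArg (fun σ : Traj (binAug M) => σ.2) h)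
  exact congrArg (fun σ : Traj (binAug M) => (σ.1 i).1) h

theorem binAug_P_of_flag_eq {s : X × Bool} {a : A} {s' : X × Bool}
    (h : s'.2 = (s.2 || decide (s'.1 ∈ M.Xa))) : (binAug M).P s a s' = M.P s.1 a s'.1 :=
  if_pos h

theorem binAug_P_of_flag_ne {s : X × Bool} {a : A} {s' : X × Bool}
    (h : s'.2 ≠ (s.2 || decide (s'.1 ∈ M.Xa))) : (binAug M).P s a s' = 0 :=
  if_neg h

theorem trajProb_liftTraj (q : HistPolicy (binAug M)) (x0 : X) (τ : Traj M) :
    trajProb (binAug M) q (x0, false) (liftTraj τ) = trajProb M q.ofBinAug x0 τ := by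
  have hstart : (liftTraj τ).1 0 = (x0, false) ↔ τ.1 0 = x0 := by
    simp only [liftTraj, withAlarmFlag, Prod.mk.injEq]
    exact and_iff_left (alarmFlag_zero M.Xa τ.1)
  have hhist : ∀ t, histStates (liftTraj τ) t = withAlarmFlag M.Xa (histStates τ t) := fun t => by
    funext i
    exact Prod.ext rfl (alarmFlag_castLE M.Xa _ τ.1 i).symm
  have hstep : ∀ t : Fin (binAug M).T, (binAug M).P ((liftTraj τ).1 t.castSucc) ((liftTraj τ).2 t)
      ((liftTraj τ).1 t.succ) = M.P (τ.1 t.castSucc) (τ.2 t) (τ.1 t.succ) := fun t =>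
    binAug_P_of_flag_eq (alarmFlag_succ M.Xa τ.1 t)
  unfold trajProb
  congr 1
  · simp only [hstart]
  · refine Finset.prod_congr rfl fun t _ => ?_
    rw [hhist, hstep t]
    rfl

theorem exists_liftTraj_of_trajProb_ne_zero {q : HistPolicy (binAug M)} {x0 : X}
    {σ : Traj (binAug M)} (hσ : trajProb (binAug M) q (x0, false) σ ≠ 0) :
    ∃ τ, liftTraj τ = σ := by
  have hstart : (σ.1 0).2 = false := by
    by_contra h
    exact hσ (trajProb_eq_zero_of_start_ne q _ fun h0 => h (by rw [h0]))
  have hstep : ∀ t : Fin (binAug M).T,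
      (σ.1 t.succ).2 = ((σ.1 t.castSucc).2 || decide ((σ.1 t.succ).1 ∈ M.Xa)) := fun t => by
    by_contra h
    exact hσ (trajProb_eq_zero_of_transition_eq_zero q _ t (binAug_P_of_flag_ne h))
  have hflag : ∀ i, (σ.1 i).2 = alarmFlag M.Xa (fun k => (σ.1 k).1) i := by
    intro i
    induction i using Fin.induction with
    | zero => rw [hstart, alarmFlag_zero]
    | succ t ih => rw [hstep t, ih, alarmFlag_succ]
  exact ⟨(fun i => (σ.1 i).1, σ.2), Prod.ext (funext fun i => Prod.ext rfl (hflag i).symm) rfl⟩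

theorem sum_eq_sum_liftTraj {q : HistPolicy (binAug M)} {x0 : X} (f : Traj (binAug M) → ℝ)
    (hf : ∀ σ, trajProb (binAug M) q (x0, false) σ = 0 → f σ = 0) :
    ∑ σ, f σ = ∑ τ, f (liftTraj τ) := by
  refine (Fintype.sum_of_injective liftTraj liftTraj_injective _ f (fun σ hσ => ?_)
    fun _ => rfl).symm
  exact hf σ (not_not.mp (mt exists_liftTraj_of_trajProb_ne_zero hσ))

theorem J_ofBinAug (q : HistPolicy (binAug M)) (x0 : X) :
    J M q.ofBinAug x0 = J (binAug M) q (x0, false) := by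
  rw [J, J, sum_eq_sum_liftTraj (q := q) (x0 := x0) _ fun σ hσ => by rw [hσ, zero_mul]]
  refine Finset.sum_congr rfl fun τ _ => ?_
  rw [trajProb_liftTraj]
  rfl

theorem probEvent_binAug (q : HistPolicy (binAug M)) (x0 : X) (E : Traj (binAug M) → Prop) :
    probEvent (binAug M) q (x0, false) E = probEvent M q.ofBinAug x0 (fun τ => E (liftTraj τ)) := by
  rw [probEvent, probEvent, sum_eq_sum_liftTraj (q := q) (x0 := x0) _ fun σ hσ => by
    rw [hσ, ite_self]]
  simp only [trajProb_liftTraj]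

end BinAug

theorem binAug_policy_transfer_general
    (M : MDP X A) (x0 : X) (hx0 : x0 ∉ M.Xa) (q : HistPolicy (binAug M)) :
    ∃ p : HistPolicy M,
      J M p x0 = J (binAug M) q (x0, false) ∧
      probEvent M p x0 (fun τ => ∃ t, τ.1 t ∈ M.Xa) =
        probEvent (binAug M) q (x0, false)
          (fun σ => (σ.1 (Fin.last (binAug M).T)).2 = true) := by
  refine ⟨q.ofBinAug, J_ofBinAug q x0, ?_⟩
  rw [probEvent_binAug]
  refine probEvent_congr _ x0 fun τ h0 => ?_
  exact (alarmFlag_last_iff M.Xa (h0 ▸ hx0 : τ.1 0 ∉ M.Xa)).symm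

/-- Any policy of the binary augmented MDP can be imitated by a
policy of the original MDP achieving the same objective value and whose joint
alarm probability equals the probability of the final flag being raised. -/
theorem binAug_policy_transfer [Nonempty X] [Nonempty A]
    (M : MDP X A) (x0 : X) (hx0 : x0 ∉ M.Xa) (q : HistPolicy (binAug M)) :
    ∃ p : HistPolicy M,
      J M p x0 = J (binAug M) q (x0, false) ∧
      probEvent M p x0 (fun τ => ∃ t, τ.1 t ∈ M.Xa) =
        probEvent (binAug M) q (x0, false)
          (fun σ => (σ.1 (Fin.last (binAug M).T)).2 = true) :=
  binAug_policy_transfer_general M x0 hx0 q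

end
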